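/- Let G be a finite simple graph with minimum degree at least 1, and let c be a coloring that is an equilibrium under any one of the utilities U_b, U_#, or U_τ. If u and v are two vertices whose agents are both segregated, then c(u) = c(v); that is, at most one type has segregated agents at equilibrium. -/

import Mathlib

open SimpleGraph Finset

/-- The coloring obtained from `c` by swapping the colors (agents) at `u` and `v`. -/
def swapColoring {V : Type*} [DecidableEq V] {t : ℕ} (c : V → Fin t) (u v : V) : V → Fin t :=
  fun w => if w = u then c v else if w = v then c u else c w

/-- The binary utility `U_b`: 1 if some neighbor has a different type, 0 otherwise. -/
def Ub {V : Type*} [Fintype V] (G : SimpleGraph V) [DecidableRel G.Adj]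
    {t : ℕ} (c : V → Fin t) (v : V) : ℕ :=
  if ∃ w ∈ G.neighborFinset v, c w ≠ c v then 1 else 0

/-- The difference-seeking utility `U_#`: the number of neighbors of a different type. -/
def Usharp {V : Type*} [Fintype V] (G : SimpleGraph V) [DecidableRel G.Adj]
    {t : ℕ} (c : V → Fin t) (v : V) : ℕ :=
  ((G.neighborFinset v).filter fun w => c w ≠ c v).card

/-- `T_c(v)`: the set of types present in the neighborhood of `v`. -/
def typesIn {V : Type*} [Fintype V] (G : SimpleGraph V) [DecidableRel G.Adj]
    {t : ℕ} (c : V → Fin t) (v : V) : Finset (Fin t) :=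
  (G.neighborFinset v).image c

/-- The variety-seeking utility `U_τ`: the number of types other than `c v` in the
neighborhood of `v`. -/
def Utau {V : Type*} [Fintype V] (G : SimpleGraph V) [DecidableRel G.Adj]
    {t : ℕ} (c : V → Fin t) (v : V) : ℕ :=
  ((typesIn G c v).erase (c v)).card

/-- The swap of `u` and `v` is improving under utility `U`. -/
def ImprovingSwap {V : Type*} [DecidableEq V] {t : ℕ}
    (U : (V → Fin t) → V → ℕ) (c : V → Fin t) (u v : V) : Prop :=
  U c u < U (swapColoring c u v) v ∧ U c v < U (swapColoring c u v) u

/-- `c` is an equilibrium under the utility `U`: no improving swap exists. -/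
def Equilibrium {V : Type*} [DecidableEq V] {t : ℕ}
    (U : (V → Fin t) → V → ℕ) (c : V → Fin t) : Prop :=
  ∀ u v : V, c u ≠ c v → ¬ ImprovingSwap U c u v

/-- The number of monochromatic edges of `c`. -/
def monoCount {V : Type*} [Fintype V] [DecidableEq V] (G : SimpleGraph V) [DecidableRel G.Adj]
    {t : ℕ} (c : V → Fin t) : ℕ :=
  (G.edgeFinset.filter fun e => (e.map c).IsDiag).card

/-- The number of colorful edges of `c`. -/
def ceCount {V : Type*} [Fintype V] [DecidableEq V] (G : SimpleGraph V) [DecidableRel G.Adj]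
    {t : ℕ} (c : V → Fin t) : ℕ :=
  (G.edgeFinset.filter fun e => ¬ (e.map c).IsDiag).card

/-- The cycle graph on `ZMod n`: `i` adjacent to `i + 1` and `i - 1`. -/
def cycleZMod (n : ℕ) : SimpleGraph (ZMod n) := SimpleGraph.circulantGraph {1}

instance (n : ℕ) : DecidableRel (cycleZMod n).Adj := fun a b =>
  decidable_of_iff (a ≠ b ∧ (a - b = 1 ∨ b - a = 1)) (by simp [cycleZMod])

instance {α β : Type*} (G : SimpleGraph α) (H : SimpleGraph β)
    [DecidableRel G.Adj] [DecidableRel H.Adj] [DecidableEq α] [DecidableEq β] :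
    DecidableRel (G □ H).Adj := fun x y =>
  decidable_of_iff (G.Adj x.1 y.1 ∧ x.2 = y.2 ∨ H.Adj x.2 y.2 ∧ x.1 = y.1)
    (SimpleGraph.boxProd_adj).symm

/-! Each of the three utilities vanishes exactly at segregated agents. Two segregated agents of
different types are not adjacent, so after swapping them each one is surrounded by agents of the
other type; as every vertex has a neighbor, both go from utility 0 to positive utility, and the swap
is improving. -/

section Segregation

variable {V : Type*} [Fintype V] (G : SimpleGraph V) [DecidableRel G.Adj] {t : ℕ}

def IsSegregated (c : V → Fin t) (v : V) : Prop :=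
  ∀ w ∈ G.neighborFinset v, c w = c v

variable {G}

lemma Ub_eq_zero_iff (c : V → Fin t) (v : V) : Ub G c v = 0 ↔ IsSegregated G c v := by
  simp [Ub, IsSegregated]

lemma Usharp_eq_zero_iff (c : V → Fin t) (v : V) : Usharp G c v = 0 ↔ IsSegregated G c v := by
  simp [Usharp, IsSegregated, filter_eq_empty_iff]

lemma Utau_eq_zero_iff (c : V → Fin t) (v : V) : Utau G c v = 0 ↔ IsSegregated G c v := by
  simp only [Utau, typesIn, IsSegregated, card_eq_zero, eq_empty_iff_forall_notMem, mem_erase,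
    mem_image, mem_neighborFinset]
  exact ⟨fun h w hw => by_contra fun hne => h _ ⟨hne, w, hw, rfl⟩,
    fun h _ ⟨hne, w, hw, hcw⟩ => hne (hcw ▸ h w hw)⟩

lemma IsSegregated.not_adj {c : V → Fin t} {u v : V} (hv : IsSegregated G c v)
    (hne : c u ≠ c v) : ¬ G.Adj u v :=
  fun h => hne (hv u ((mem_neighborFinset _ _ _).mpr h.symm))

end Segregation

section Swap

variable {V : Type*} [DecidableEq V] {t : ℕ}

lemma swapColoring_comm (c : V → Fin t) (u v : V) :
    swapColoring c u v = swapColoring c v u := by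
  funext w
  unfold swapColoring
  split_ifs <;> simp_all

@[simp]
lemma swapColoring_apply_right (c : V → Fin t) (u v : V) : swapColoring c u v v = c u := by
  by_cases h : v = u <;> simp [swapColoring, h]

lemma swapColoring_apply_of_ne (c : V → Fin t) {u v w : V} (hu : w ≠ u) (hv : w ≠ v) :
    swapColoring c u v w = c w := by
  simp [swapColoring, hu, hv]

variable [Fintype V] {G : SimpleGraph V} [DecidableRel G.Adj]

lemma not_isSegregated_swapColoring {c : V → Fin t} {u v : V} (hne : c u ≠ c v)
    (hv : IsSegregated G c v) (hv₀ : (G.neighborFinset v).Nonempty) :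
    ¬ IsSegregated G (swapColoring c u v) v := by
  obtain ⟨w, hw⟩ := hv₀
  have hwv : G.Adj v w := (mem_neighborFinset _ _ _).mp hw
  have hwu : w ≠ u := by
    rintro rfl
    exact hv.not_adj hne hwv.symm
  intro hswap
  have := hswap w hw
  rw [swapColoring_apply_right, swapColoring_apply_of_ne c hwu hwv.ne', hv w hw] at this
  exact hne this.symm

lemma improvingSwap_of_isSegregated {U : (V → Fin t) → V → ℕ}
    (hU : ∀ c v, U c v = 0 ↔ IsSegregated G c v) {c : V → Fin t} {u v : V} (hne : c u ≠ c v)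
    (hu : IsSegregated G c u) (hv : IsSegregated G c v)
    (hu₀ : (G.neighborFinset u).Nonempty) (hv₀ : (G.neighborFinset v).Nonempty) :
    ImprovingSwap U c u v := by
  have gain {x y : V} (hne : c x ≠ c y) (hx : IsSegregated G c x) (hy : IsSegregated G c y)
      (hy₀ : (G.neighborFinset y).Nonempty) : U c x < U (swapColoring c x y) y := by
    rw [(hU c x).mpr hx]
    exact Nat.pos_of_ne_zero fun h => not_isSegregated_swapColoring hne hy hy₀ ((hU _ y).mp h)
  exact ⟨gain hne hu hv hv₀, swapColoring_comm c u v ▸ gain hne.symm hv hu hu₀⟩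

end Swap

theorem stmt11_general {V : Type*} [Fintype V] [DecidableEq V] (G : SimpleGraph V) [DecidableRel G.Adj]
    {t : ℕ} (hδ : 1 ≤ G.minDegree)
    (U : (V → Fin t) → V → ℕ) (hU : U = Ub G ∨ U = Usharp G ∨ U = Utau G)
    (c : V → Fin t) (heq : Equilibrium U c) (u v : V)
    (hu : ∀ w ∈ G.neighborFinset u, c w = c u)
    (hv : ∀ w ∈ G.neighborFinset v, c w = c v) :
    c u = c v := by
  have hU₀ : ∀ c v, U c v = 0 ↔ IsSegregated G c v := by
    rcases hU with rfl | rfl | rfl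
    exacts [Ub_eq_zero_iff, Usharp_eq_zero_iff, Utau_eq_zero_iff]
  have h₀ (x : V) : (G.neighborFinset x).Nonempty := by
    rw [← card_pos, card_neighborFinset_eq_degree]
    exact hδ.trans (G.minDegree_le_degree x)
  by_contra hne
  exact heq u v hne (improvingSwap_of_isSegregated hU₀ hne hu hv (h₀ u) (h₀ v))

theorem stmt11 {V : Type*} [Fintype V] [DecidableEq V] (G : SimpleGraph V) [DecidableRel G.Adj]
    {t : ℕ} (ht : 2 ≤ t) (hδ : 1 ≤ G.minDegree)
    (U : (V → Fin t) → V → ℕ) (hU : U = Ub G ∨ U = Usharp G ∨ U = Utau G)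
    (c : V → Fin t) (heq : Equilibrium U c) (u v : V)
    (hu : ∀ w ∈ G.neighborFinset u, c w = c u)
    (hv : ∀ w ∈ G.neighborFinset v, c w = c v) :
    c u = c v :=
  stmt11_general G hδ U hU c heq u v hu hv
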